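/- arXiv:1511.02899 — 2 statements merged into one kernel-verified Lean document; each statement's English description precedes it below -/
import Mathlib

section
/- (Syndrome-coding construction.) Let n, k, T be integers and H a k×n matrix over 𝔽₂ such that every nonzero vector z ∈ 𝔽₂ⁿ with H·z = 0 has Hamming weight at least 2T+1, and such that the k×k submatrix formed by the last k columns of H is invertible. Then for every integer s with 0 ≤ s ≤ n−k, the pair (s+k, n−s) is achievable for the deterministic combinatorial Slepian–Wolf scheme with parameters (n, T); concretely, the pair of 𝔽₂-linear encodings Code_A(X) = (x_1,…,x_s, H·X) and Code_B(Y) = (y_{s+1},…,y_{n−k}, H·Y) is uniquely decodable for parameters (n, T). -/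
/-- A pair of encodings is uniquely decodable for the combinatorial Slepian–Wolf
scheme with parameters `(n, T)`. -/
def UniquelyDecodable {n mA mB : ℕ} (T : ℕ)
    (CodeA : (Fin n → Bool) → (Fin mA → Bool))
    (CodeB : (Fin n → Bool) → (Fin mB → Bool)) : Prop :=
  ∀ x y x' y' : Fin n → Bool,
    hammingDist x y ≤ T → hammingDist x' y' ≤ T →
    CodeA x = CodeA x' → CodeB y = CodeB y' → (x, y) = (x', y')

/-- `(mA, mB)` is an achievable pair of rates for the deterministic combinatorial
Slepian–Wolf scheme with parameters `(n, T)`. -/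
def Achievable (n T mA mB : ℕ) : Prop :=
  ∃ (CodeA : (Fin n → Bool) → (Fin mA → Bool))
    (CodeB : (Fin n → Bool) → (Fin mB → Bool)),
    UniquelyDecodable T CodeA CodeB

/-- Identification of `{0,1}` with the field `𝔽₂`. -/
def toF2 {n : ℕ} (x : Fin n → Bool) : Fin n → ZMod 2 := fun i => if x i then 1 else 0

/-!
If `Code_A x = Code_A x'` and `Code_B y = Code_B y'`, then `H x = H x'` and `H y = H y'`, so
`x - y` and `x' - y'`, both of weight at most `T`, have the same syndrome; since the kernel of `H`
has minimum weight `2T + 1` they are equal. Hence `z = x - x' = y - y'` lies in the kernel. It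
vanishes on the first `s` coordinates (read off from `Code_A`) and on the next `n - k - s` (read
off from `Code_B`), so it is supported on the last `k` columns, where `H` is invertible: `z = 0`.
-/

open Function Matrix

theorem hammingDist_sub_sub_le {ι : Type*} [Fintype ι] {β : ι → Type*}
    [∀ i, AddGroup (β i)] [∀ i, DecidableEq (β i)] (a a' b b' : ∀ i, β i) :
    hammingDist (a - a') (b - b') ≤ hammingDist a b + hammingDist a' b' :=
  calc hammingDist (a - a') (b - b')
      ≤ hammingDist (a - a') (b - a') + hammingDist (b - a') (b - b') :=
        hammingDist_triangle _ _ _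
    _ = hammingDist a b + hammingDist a' b' := by
        congr 1
        · exact hammingDist_comp (fun i x => x - a' i) fun _ => sub_left_injective
        · exact hammingDist_comp (fun i x => b i - x) fun _ => sub_right_injective

section SyndromeDecoding

variable {R m ι : Type*} [Fintype ι] {H : Matrix m ι R} {T : ℕ}

theorem Matrix.sub_eq_sub_of_mulVec_eq_of_hammingDist_le [Ring R] [DecidableEq R]
    (hdist : ∀ z, z ≠ 0 → H *ᵥ z = 0 → 2 * T + 1 ≤ hammingNorm z) {a a' b b' : ι → R}
    (ha : H *ᵥ a = H *ᵥ a') (hb : H *ᵥ b = H *ᵥ b')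
    (hab : hammingDist a b ≤ T) (hab' : hammingDist a' b' ≤ T) :
    a - a' = b - b' := by
  by_contra hne
  have hweight := hdist (-(a - a') + (b - b')) (by rwa [Ne, neg_add_eq_zero])
    (by simp [mulVec_add, mulVec_sub, ha, hb])
  rw [← hammingDist_eq_hammingNorm] at hweight
  have := hammingDist_sub_sub_le a a' b b'
  omega

theorem Matrix.eq_zero_of_mulVec_eq_zero_of_isUnit_submatrix [Semiring R] [Fintype m]
    [DecidableEq m] {g : m → ι} (hg : Injective g) (hH : IsUnit (H.submatrix id g))
    {z : ι → R} (hz : H *ᵥ z = 0) (hsupp : ∀ i ∉ Set.range g, z i = 0) : z = 0 := by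
  have hrestrict : H.submatrix id g *ᵥ (z ∘ g) = H *ᵥ z := by
    ext r
    exact Fintype.sum_of_injective g hg _ _ (fun i hi => by simp [hsupp i hi]) fun _ => rfl
  have hzg : z ∘ g = 0 :=
    mulVec_injective_of_isUnit hH (by rw [hrestrict, hz, mulVec_zero])
  ext i
  by_cases hi : i ∈ Set.range g
  · obtain ⟨j, rfl⟩ := hi
    exact congrFun hzg j
  · exact hsupp i hi

theorem Matrix.eq_and_eq_of_mulVec_eq_of_hammingDist_le [Ring R] [DecidableEq R] [Fintype m]
    [DecidableEq m] (hdist : ∀ z, z ≠ 0 → H *ᵥ z = 0 → 2 * T + 1 ≤ hammingNorm z)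
    {g : m → ι} (hg : Injective g) (hH : IsUnit (H.submatrix id g)) {a a' b b' : ι → R}
    (ha : H *ᵥ a = H *ᵥ a') (hb : H *ᵥ b = H *ᵥ b')
    (hab : hammingDist a b ≤ T) (hab' : hammingDist a' b' ≤ T)
    (hagree : ∀ i ∉ Set.range g, a i = a' i ∨ b i = b' i) :
    a = a' ∧ b = b' := by
  have hdiff := sub_eq_sub_of_mulVec_eq_of_hammingDist_le hdist ha hb hab hab'
  have hzero : a - a' = 0 := by
    refine eq_zero_of_mulVec_eq_zero_of_isUnit_submatrix hg hH
      (by rw [mulVec_sub, ha, sub_self]) fun i hi => ?_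
    rcases hagree i hi with h | h
    · exact sub_eq_zero.2 h
    · rw [hdiff]
      exact sub_eq_zero.2 h
  rw [hzero, eq_comm, sub_eq_zero] at hdiff
  exact ⟨sub_eq_zero.1 hzero, hdiff⟩

end SyndromeDecoding

theorem Fin.eq_and_eq_of_dite_lt_eq {α : Type*} {m a b : ℕ} (hm : m = a + b)
    {f f' : Fin a → α} {g g' : Fin b → α}
    (h : (fun i : Fin m => if hi : i.val < a then f ⟨i, hi⟩ else g ⟨i.val - a, by omega⟩) =
      fun i : Fin m => if hi : i.val < a then f' ⟨i, hi⟩ else g' ⟨i.val - a, by omega⟩) :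
    f = f' ∧ g = g' := by
  constructor
  · ext j
    simpa using congrFun h ⟨j, by omega⟩
  · ext j
    simpa using congrFun h ⟨a + j, by omega⟩

theorem ZMod.decide_eq_one_injective : Injective fun a : ZMod 2 => decide (a = 1) := by
  decide

theorem toF2_injective {n : ℕ} : Injective (toF2 (n := n)) :=
  Injective.comp_left (g := fun b : Bool => if b then (1 : ZMod 2) else 0) (by decide)

theorem toF2_apply_eq_of_eq {n : ℕ} {x x' : Fin n → Bool} {i : Fin n} (h : x i = x' i) :
    toF2 x i = toF2 x' i := by
  simp [toF2, h]

theorem hammingDist_toF2 {n : ℕ} (x y : Fin n → Bool) :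
    hammingDist (toF2 x) (toF2 y) = hammingDist x y :=
  hammingDist_comp (fun _ (b : Bool) => if b then (1 : ZMod 2) else 0) fun _ => by decide

/-- Syndrome-coding construction: if `H` is a parity-check matrix of a code
correcting `T` errors (all nonzero vectors of the kernel have weight `≥ 2T+1`)
whose last `k` columns form an invertible minor, then
`Code_A(X) = (x_1,…,x_s, H·X)` and `Code_B(Y) = (y_{s+1},…,y_{n−k}, H·Y)` form a
uniquely decodable pair for parameters `(n, T)`; in particular `(s+k, n−s)` is
achievable. -/
theorem stmt7 (n k T s : ℕ) (hkn : k ≤ n) (hs : s ≤ n - k)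
    (H : Matrix (Fin k) (Fin n) (ZMod 2))
    (hdist : ∀ z : Fin n → ZMod 2, z ≠ 0 → H.mulVec z = 0 → 2 * T + 1 ≤ hammingNorm z)
    (hinv : IsUnit (H.submatrix (id : Fin k → Fin k)
      (fun j : Fin k => (⟨n - k + j.val, by have := j.isLt; omega⟩ : Fin n)))) :
    UniquelyDecodable T
      (fun X : Fin n → Bool => fun i : Fin (s + k) =>
        if h : i.val < s then X ⟨i.val, by omega⟩
        else decide (H.mulVec (toF2 X) ⟨i.val - s, by have := i.isLt; omega⟩ = 1))
      (fun Y : Fin n → Bool => fun i : Fin (n - s) =>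
        if h : i.val < n - k - s then Y ⟨s + i.val, by omega⟩
        else decide (H.mulVec (toF2 Y) ⟨i.val - (n - k - s), by have := i.isLt; omega⟩ = 1)) ∧
    Achievable n T (s + k) (n - s) := by
  refine ⟨?decodable, _, _, ?decodable⟩
  intro x y x' y' hxy hxy' hA hB
  obtain ⟨hx_pre, hx_syn⟩ := Fin.eq_and_eq_of_dite_lt_eq rfl
    (f := fun j : Fin s => x ⟨j, by omega⟩) (f' := fun j : Fin s => x' ⟨j, by omega⟩)
    (g := fun j => decide ((H *ᵥ toF2 x) j = 1))
    (g' := fun j => decide ((H *ᵥ toF2 x') j = 1)) hA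
  obtain ⟨hy_mid, hy_syn⟩ := Fin.eq_and_eq_of_dite_lt_eq (a := n - k - s) (b := k) (by omega)
    (f := fun j : Fin (n - k - s) => y ⟨s + j, by omega⟩)
    (f' := fun j : Fin (n - k - s) => y' ⟨s + j, by omega⟩)
    (g := fun j => decide ((H *ᵥ toF2 y) j = 1))
    (g' := fun j => decide ((H *ᵥ toF2 y') j = 1)) hB
  have hagree : ∀ i : Fin n, i.val < n - k → toF2 x i = toF2 x' i ∨ toF2 y i = toF2 y' i := by
    intro i hi
    by_cases hs_i : i.val < s
    · exact Or.inl (toF2_apply_eq_of_eq (congrFun hx_pre ⟨i, hs_i⟩))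
    · refine Or.inr (toF2_apply_eq_of_eq ?_)
      simpa [Nat.add_sub_cancel' (not_lt.1 hs_i)] using congrFun hy_mid ⟨i - s, by omega⟩
  have hinj : Injective fun j : Fin k => (⟨n - k + j.val, by omega⟩ : Fin n) :=
    fun j j' h => Fin.ext (by simpa using congrArg Fin.val h)
  obtain ⟨hx, hy⟩ := H.eq_and_eq_of_mulVec_eq_of_hammingDist_le hdist hinj hinv
    (ZMod.decide_eq_one_injective.comp_left hx_syn) (ZMod.decide_eq_one_injective.comp_left hy_syn)
    (by rwa [hammingDist_toF2]) (by rwa [hammingDist_toF2]) fun i hi =>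
      hagree i (not_le.1 fun h => hi ⟨⟨i - (n - k), by omega⟩, Fin.ext (by simp; omega)⟩)
  exact Prod.ext (toF2_injective hx) (toF2_injective hy)
end

section
/- There exists a real α₀ > 0 such that for every α ∈ (0, α₀) there exist δ > 0 and n₀ with the following property: for all n ≥ n₀, no pair of integers (m_A, m_B) with |m_A − n| ≤ δn and |m_B − h(α)·n| ≤ δn is achievable for the deterministic combinatorial Slepian–Wolf scheme with parameters (n, ⌊αn⌋); symmetrically, no pair with |m_A − h(α)·n| ≤ δn and |m_B − n| ≤ δn is achievable. -/
/-- The binary entropy function `h(α) = −α·log₂ α − (1−α)·log₂(1−α)`. -/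
noncomputable def binEnt (a : ℝ) : ℝ :=
  -a * Real.logb 2 a - (1 - a) * Real.logb 2 (1 - a)

/-!
A uniquely decodable pair forces every fibre of `CodeB` to be a binary code of minimum distance
greater than `2T`: two words of one fibre within distance `2T` have a common neighbour `x` within
distance `T` of both, and `(x, y)`, `(x, y')` would collide. Some fibre has at least `2^(n - m_B)`
words. Such a code cannot come close to the Hamming bound: for `β = α + α²` we still have
`β(1 - β) < α`, so by the Johnson bound every Hamming ball of radius `βn` contains only `O(1)`
codewords, and double counting gives `|C| · binom(n, βn) ≤ O(2^n)`. Since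
`log₂ binom(n, βn) ≥ h(β)n - o(n)`, this forces `m_B ≥ (h(β) - o(1))n`, a fixed margin above
`h(α)n`. The second corner follows by exchanging the roles of the two sources.
-/

open Finset Filter Real Topology

theorem exists_hammingDist_le_of_hammingDist_le_add {ι β : Type*} [Fintype ι] [DecidableEq ι]
    [DecidableEq β] {y y' : ι → β} {s t : ℕ}
    (h : hammingDist y y' ≤ s + t) : ∃ x, hammingDist x y ≤ s ∧ hammingDist x y' ≤ t := by
  set D : Finset ι := {i | y i ≠ y' i}
  obtain ⟨S, hSD, hS⟩ := exists_subset_card_eq (s := D) (min_le_right s #D)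
  refine ⟨S.piecewise y' y, ?_, ?_⟩
  · have : ({i | S.piecewise y' y i ≠ y i} : Finset ι) = S := by
      ext i
      by_cases hi : i ∈ S
      · simpa [hi, eq_comm] using (mem_filter.mp (hSD hi)).2
      · simp [hi]
    rw [hammingDist, this]
    omega
  · have : ({i | S.piecewise y' y i ≠ y' i} : Finset ι) = D \ S := by
      ext i
      by_cases hi : i ∈ S <;> simp [hi, D]
    have hD : #D = hammingDist y y' := rfl
    rw [hammingDist, this, card_sdiff_of_subset hSD]
    omega

section BinaryCodes

variable {n : ℕ}

theorem choose_le_card_hammingDist_le (c : Fin n → Bool) (e : ℕ) :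
    n.choose e ≤ #{z | hammingDist c z ≤ e} := by
  let flip (s : Finset (Fin n)) : Fin n → Bool := fun i => if i ∈ s then !c i else c i
  have hflip (s : Finset (Fin n)) : hammingDist c (flip s) = #s := by
    rw [hammingDist]
    congr 1
    ext i
    by_cases hi : i ∈ s <;> simp [hi, flip]
  rw [show n.choose e = #(powersetCard e (univ : Finset (Fin n))) by simp]
  refine card_le_card_of_injOn flip (fun s hs => ?_) (fun s _ t _ hst => ?_)
  · simp [hflip, (mem_powersetCard.mp hs).2]
  · ext i
    have := congrFun hst i
    by_cases hs : i ∈ s <;> by_cases ht : i ∈ t <;> simp_all [flip]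

theorem card_mul_choose_le {C : Finset (Fin n → Bool)} {e : ℕ} {L : ℝ}
    (hL : ∀ z, (#{c ∈ C | hammingDist c z ≤ e} : ℝ) ≤ L) :
    (#C : ℝ) * n.choose e ≤ 2 ^ n * L := by
  have hball : #C * n.choose e ≤ ∑ c ∈ C, #{z | hammingDist c z ≤ e} := by
    simpa using card_nsmul_le_sum C _ _ fun c _ => choose_le_card_hammingDist_le c e
  have hcount := sum_card_bipartiteAbove_eq_sum_card_bipartiteBelow
    (s := C) (t := univ) (fun c z => hammingDist c z ≤ e)
  calc (#C : ℝ) * n.choose e ≤ ∑ z, (#{c ∈ C | hammingDist c z ≤ e} : ℝ) := by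
        exact_mod_cast hball.trans_eq hcount
    _ ≤ ∑ _z : Fin n → Bool, L := sum_le_sum fun z _ => hL z
    _ = 2 ^ n * L := by simp

theorem card_mul_card_sub_one_mul_le_sum_hammingDist {C : Finset (Fin n → Bool)} {d : ℕ}
    (hd : ∀ u ∈ C, ∀ v ∈ C, u ≠ v → d ≤ hammingDist u v) :
    (#C : ℝ) * (#C - 1) * d ≤ ∑ u ∈ C, ∑ v ∈ C, (hammingDist u v : ℝ) := by
  rw [mul_assoc, ← nsmul_eq_mul]
  refine card_nsmul_le_sum C _ _ fun u hu => ?_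
  have hC : 1 ≤ #C := card_pos.mpr ⟨u, hu⟩
  rw [← sum_erase C (a := u) (f := fun v => (hammingDist u v : ℝ)) (by simp)]
  calc (#C - 1 : ℝ) * d = #(C.erase u) • (d : ℝ) := by
        rw [card_erase_of_mem hu, nsmul_eq_mul, Nat.cast_sub hC, Nat.cast_one]
    _ ≤ ∑ v ∈ C.erase u, (hammingDist u v : ℝ) := card_nsmul_le_sum _ _ _ fun v hv => by
        exact_mod_cast hd u hu v (mem_of_mem_erase hv) (ne_of_mem_erase hv).symm

theorem johnson_bound {C : Finset (Fin n → Bool)} {d e : ℕ} (z : Fin n → Bool)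
    (hd : ∀ u ∈ C, ∀ v ∈ C, u ≠ v → d ≤ hammingDist u v)
    (hz : ∀ v ∈ C, hammingDist v z ≤ e) (he : 2 * e ≤ n) :
    (#C : ℝ) * (d * n - 2 * e * (n - e)) ≤ d * n := by
  set M : ℝ := (#C : ℝ)
  let x (v : Fin n → Bool) (j : Fin n) : ℝ := if v j = z j then 0 else 1
  set b : Fin n → ℝ := fun j => ∑ v ∈ C, x v j
  set K := ∑ j, b j
  have hdist_z (v : Fin n → Bool) : (hammingDist v z : ℝ) = ∑ j, x v j := by
    simp [hammingDist, natCast_card_filter, x]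
  -- over `Bool`, `u j ≠ v j` exactly when one of `u j`, `v j` differs from `z j`
  have hdist (u v : Fin n → Bool) :
      (hammingDist u v : ℝ) = ∑ j, (x u j + x v j - 2 * x u j * x v j) := by
    simp only [hammingDist, natCast_card_filter]
    refine sum_congr rfl fun j _ => ?_
    dsimp only [x]
    cases u j <;> cases v j <;> cases z j <;> norm_num
  have hpairs : M * (M - 1) * d ≤ 2 * M * K - 2 * ∑ j, b j ^ 2 := by
    refine (card_mul_card_sub_one_mul_le_sum_hammingDist hd).trans_eq ?_
    have hj (j : Fin n) : ∑ u ∈ C, ∑ v ∈ C, (x u j + x v j - 2 * x u j * x v j)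
        = 2 * M * b j - 2 * b j ^ 2 := by
      simp only [sum_sub_distrib, sum_add_distrib, sum_const, nsmul_eq_mul, ← mul_sum,
        ← sum_mul, b, M]
      ring
    calc ∑ u ∈ C, ∑ v ∈ C, (hammingDist u v : ℝ)
        = ∑ u ∈ C, ∑ j, ∑ v ∈ C, (x u j + x v j - 2 * x u j * x v j) :=
          sum_congr rfl fun u _ => by simp only [hdist]; exact sum_comm
      _ = ∑ j, (2 * M * b j - 2 * b j ^ 2) := by rw [sum_comm]; exact sum_congr rfl fun j _ => hj j
      _ = 2 * M * K - 2 * ∑ j, b j ^ 2 := by simp only [sum_sub_distrib, ← mul_sum, K]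
  have hK : K ≤ M * e := by
    calc K = ∑ v ∈ C, (hammingDist v z : ℝ) := by simp only [hdist_z, K, b]; exact sum_comm
      _ ≤ ∑ _v ∈ C, (e : ℝ) := sum_le_sum fun v hv => by exact_mod_cast hz v hv
      _ = M * e := by simp [M]
  have hCS : K ^ 2 ≤ n * ∑ j, b j ^ 2 := by
    simpa using sq_sum_le_card_mul_sum_sq (s := univ) (f := b)
  have hK0 : 0 ≤ K := sum_nonneg fun j _ => sum_nonneg fun v _ => by positivity
  have he' : 2 * (e : ℝ) ≤ n := by exact_mod_cast he
  rcases (show 0 ≤ M by positivity).eq_or_lt with hM | hM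
  · rw [← hM, zero_mul]
    positivity
  -- `K ↦ 2nMK - 2K²` is increasing for `K ≤ nM/2`, and `K ≤ Me ≤ nM/2`
  have hquad : 2 * n * M * K - 2 * K ^ 2 ≤ M * (2 * M * e * (n - e)) := by
    nlinarith [mul_nonneg (sub_nonneg.mpr hK) (show 0 ≤ n * M - M * e - K by nlinarith)]
  have hcancel : M * (n * (M - 1) * d) ≤ M * (2 * M * e * (n - e)) := by
    nlinarith
  nlinarith [le_of_mul_le_mul_left hcancel hM]

end BinaryCodes

theorem exists_eventually_card_filter_hammingDist_le_le {α β : ℝ} (hβ0 : 0 ≤ β) (hβ : β ≤ 1 / 2)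
    (hαβ : β * (1 - β) < α) :
    ∃ L : ℝ, ∀ᶠ n : ℕ in atTop, ∀ C : Finset (Fin n → Bool),
      (∀ u ∈ C, ∀ v ∈ C, u ≠ v → 2 * ⌊α * n⌋₊ < hammingDist u v) →
      ∀ z, (#{c ∈ C | hammingDist c z ≤ ⌊β * n⌋₊} : ℝ) ≤ L := by
  have hα : 0 ≤ α := by nlinarith
  set r : ℕ → ℝ := fun n => (2 * ⌊α * n⌋₊ + 1) / n
  set s : ℕ → ℝ := fun n => ⌊β * n⌋₊ / n
  set q : ℕ → ℝ := fun n => r n - 2 * s n * (1 - s n)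
  have hr : Tendsto r atTop (𝓝 (2 * α)) := by
    have := (((tendsto_nat_floor_mul_div_atTop hα).comp tendsto_natCast_atTop_atTop).const_mul
      2).add tendsto_one_div_atTop_nhds_zero_nat
    rw [add_zero] at this
    refine this.congr fun n => ?_
    simp [r, add_div, mul_div_assoc]
  have hs : Tendsto s atTop (𝓝 β) :=
    (tendsto_nat_floor_mul_div_atTop hβ0).comp tendsto_natCast_atTop_atTop
  have hq : Tendsto q atTop (𝓝 (2 * α - 2 * β * (1 - β))) :=
    hr.sub ((hs.const_mul 2).mul (tendsto_const_nhds.sub hs))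
  have hq0 : 0 < 2 * α - 2 * β * (1 - β) := by linarith
  refine ⟨2 * α / (2 * α - 2 * β * (1 - β)) + 1, ?_⟩
  filter_upwards [hq.eventually (lt_mem_nhds hq0), (hr.div hq hq0.ne').eventually
    (gt_mem_nhds (lt_add_one _)), eventually_gt_atTop 0] with n hqn hrq hn C hC z
  have hn' : (0 : ℝ) < n := by exact_mod_cast hn
  have he : 2 * ⌊β * n⌋₊ ≤ n := by
    have : (⌊β * n⌋₊ : ℝ) ≤ β * n := Nat.floor_le (by positivity)
    exact_mod_cast (show (2 * ⌊β * n⌋₊ : ℝ) ≤ n by nlinarith)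
  have hJ := johnson_bound (d := 2 * ⌊α * n⌋₊ + 1) z
    (fun u hu v hv huv => hC u (mem_filter.mp hu).1 v (mem_filter.mp hv).1 huv)
    (fun v hv => (mem_filter.mp hv).2) he
  -- the Johnson bound divided by `n²`
  have hbound : (#{c ∈ C | hammingDist c z ≤ ⌊β * n⌋₊} : ℝ) * q n ≤ r n := by
    have hqr : q n = ((2 * ⌊α * n⌋₊ + 1) * n - 2 * ⌊β * n⌋₊ * (n - ⌊β * n⌋₊)) / n ^ 2 := by
      simp only [q, r, s]
      field_simp
    rw [hqr, mul_div_assoc', div_le_iff₀ (by positivity)]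
    push_cast at hJ
    calc _ ≤ (2 * ⌊α * n⌋₊ + 1) * (n : ℝ) := hJ
      _ = r n * n ^ 2 := by simp only [r]; field_simp
  exact ((le_div_iff₀ hqn).mpr hbound).trans hrq.le

-- The `j`-th term of the binomial expansion of `n ^ n = (k + (n - k)) ^ n`.
def binomialTerm (n k j : ℕ) : ℕ := n.choose j * (k ^ j * (n - k) ^ (n - j))

theorem succ_mul_binomialTerm_succ {n k j : ℕ} (hj : j < n) :
    (j + 1) * (n - k) * binomialTerm n k (j + 1) = (n - j) * k * binomialTerm n k j := by
  have hpow : (n - k) ^ (n - j) = (n - k) ^ (n - (j + 1)) * (n - k) := by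
    rw [← pow_succ]
    congr 1
    omega
  calc (j + 1) * (n - k) * binomialTerm n k (j + 1)
      = (n.choose (j + 1) * (j + 1)) * (k ^ (j + 1) * ((n - k) ^ (n - (j + 1)) * (n - k))) := by
        rw [binomialTerm]; ring
    _ = (n - j) * k * binomialTerm n k j := by
        rw [Nat.choose_succ_right_eq, ← hpow, binomialTerm, pow_succ]; ring

theorem binomialTerm_le {n k : ℕ} (hk : k < n) (j : ℕ) :
    binomialTerm n k j ≤ binomialTerm n k k := by
  have hnk : 0 < n - k := by omega
  have hup : MonotoneOn (binomialTerm n k) (Set.Iic k) := by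
    refine monotoneOn_of_le_succ Set.ordConnected_Iic fun i _ _ hi => ?_
    rw [Order.succ_eq_add_one, Set.mem_Iic] at *
    refine Nat.le_of_mul_le_mul_left ?_ (show 0 < (i + 1) * (n - k) by positivity)
    rw [succ_mul_binomialTerm_succ (by omega)]
    refine Nat.mul_le_mul_right _ ?_
    calc (i + 1) * (n - k) ≤ k * (n - i) := Nat.mul_le_mul (by omega) (by omega)
      _ = (n - i) * k := mul_comm _ _
  have hdown : AntitoneOn (binomialTerm n k) {i | k ≤ i} := by
    refine antitoneOn_nat_Ici_of_succ_le fun i hi => ?_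
    rcases lt_or_ge i n with hin | hin
    · refine Nat.le_of_mul_le_mul_left ?_ (show 0 < (i + 1) * (n - k) by positivity)
      rw [succ_mul_binomialTerm_succ hin]
      refine Nat.mul_le_mul_right _ ?_
      calc (n - i) * k ≤ (n - k) * (i + 1) := Nat.mul_le_mul (by omega) (by omega)
        _ = (i + 1) * (n - k) := mul_comm _ _
    · simp [binomialTerm, Nat.choose_eq_zero_of_lt (show n < i + 1 by omega)]
  rcases le_total j k with hj | hj
  · exact hup hj Set.self_mem_Iic hj
  · exact hdown (le_refl k) hj hj

theorem sum_binomialTerm {n k : ℕ} (hk : k ≤ n) :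
    ∑ j ∈ range (n + 1), binomialTerm n k j = n ^ n := by
  have := (add_pow k (n - k) n).symm
  rw [Nat.add_sub_cancel' hk] at this
  rw [← this]
  exact sum_congr rfl fun j _ => by simp only [binomialTerm, Nat.cast_id]; ring

theorem pow_self_le_succ_mul_binomialTerm {n k : ℕ} (hk : k < n) :
    n ^ n ≤ (n + 1) * binomialTerm n k k := by
  calc n ^ n = ∑ j ∈ range (n + 1), binomialTerm n k j := (sum_binomialTerm hk.le).symm
    _ ≤ ∑ _j ∈ range (n + 1), binomialTerm n k k := sum_le_sum fun j _ => binomialTerm_le hk j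
    _ = (n + 1) * binomialTerm n k k := by simp

theorem binEnt_eq_binEntropy_div (p : ℝ) : binEnt p = binEntropy p / log 2 := by
  rw [binEnt, binEntropy, logb, logb, log_inv, log_inv]
  ring

theorem continuous_binEnt : Continuous binEnt := by
  simpa only [funext binEnt_eq_binEntropy_div] using binEntropy_continuous.div_const _

theorem binEnt_strictMonoOn : StrictMonoOn binEnt (Set.Icc 0 2⁻¹) := fun p hp q hq hpq => by
  simpa only [binEnt_eq_binEntropy_div] using
    div_lt_div_of_pos_right (binEntropy_strictMonoOn hp hq hpq) (log_pos one_lt_two)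

theorem binEnt_div_mul_le_logb_choose {n k : ℕ} (hk0 : 0 < k) (hkn : k < n) :
    binEnt (k / n) * n ≤ logb 2 (n + 1) + logb 2 (n.choose k) := by
  have hk : (0 : ℝ) < k := by exact_mod_cast hk0
  have hnk : (0 : ℝ) < n - k := by rw [sub_pos]; exact_mod_cast hkn
  have hn : (0 : ℝ) < n := by linarith
  have hC : (0 : ℝ) < n.choose k := by exact_mod_cast Nat.choose_pos hkn.le
  have hmode : (n : ℝ) ^ n ≤ (n + 1) * (n.choose k * (k ^ k * (n - k) ^ (n - k))) := by
    have := (Nat.cast_le (α := ℝ)).mpr (pow_self_le_succ_mul_binomialTerm hkn)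
    push_cast [binomialTerm, Nat.cast_sub hkn.le] at this
    exact this
  have hlog := logb_le_logb_of_le one_lt_two (by positivity) hmode
  rw [logb_mul (by positivity) (by positivity), logb_mul (by positivity) (by positivity),
    logb_mul (by positivity) (by positivity), logb_pow, logb_pow, logb_pow,
    Nat.cast_sub hkn.le] at hlog
  have hent : binEnt (k / n) * n = n * logb 2 n - k * logb 2 k - (n - k) * logb 2 (n - k) := by
    rw [binEnt, one_sub_div hn.ne', logb_div hk.ne' hn.ne', logb_div hnk.ne' hn.ne']
    field_simp
    ring
  linarith

theorem eventually_binEnt_sub_le_logb_choose_floor {β ε : ℝ} (hβ0 : 0 < β) (hβ1 : β < 1)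
    (hε : 0 < ε) : ∀ᶠ n : ℕ in atTop, (binEnt β - ε) * n ≤ logb 2 (n.choose ⌊β * n⌋₊) := by
  have hfloor : Tendsto (fun n : ℕ => (⌊β * n⌋₊ : ℝ) / n) atTop (𝓝 β) :=
    (tendsto_nat_floor_mul_div_atTop hβ0.le).comp tendsto_natCast_atTop_atTop
  have hlog : Tendsto (fun n : ℕ => logb 2 (n + 1) / n) atTop (𝓝 0) := by
    refine ((tendsto_pow_logb_div_mul_add_atTop (b := 2) 1 (-1) 1 one_ne_zero).comp
      (tendsto_atTop_add_const_right _ 1 tendsto_natCast_atTop_atTop)).congr fun n => ?_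
    simp
  have hlim := ((continuous_binEnt.tendsto β).comp hfloor).sub hlog
  rw [sub_zero] at hlim
  have hfloor_pos : ∀ᶠ n : ℕ in atTop, 1 ≤ ⌊β * n⌋₊ :=
    (tendsto_nat_floor_atTop.comp
      (tendsto_natCast_atTop_atTop.const_mul_atTop hβ0)).eventually_ge_atTop 1
  filter_upwards [hlim.eventually (lt_mem_nhds (sub_lt_self _ hε)), hfloor_pos,
    eventually_gt_atTop 0] with n hlt hk hn
  have hn' : (0 : ℝ) < n := by exact_mod_cast hn
  have hkn : ⌊β * n⌋₊ < n := (Nat.floor_lt (by positivity)).mpr (mul_lt_of_lt_one_left hn' hβ1)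
  calc (binEnt β - ε) * n
      ≤ (binEnt (⌊β * n⌋₊ / n) - logb 2 (n + 1) / n) * n :=
        mul_le_mul_of_nonneg_right hlt.le hn'.le
    _ = binEnt (⌊β * n⌋₊ / n) * n - logb 2 (n + 1) := by field_simp
    _ ≤ logb 2 (n.choose ⌊β * n⌋₊) := by linarith [binEnt_div_mul_le_logb_choose hk hkn]

section SlepianWolf

variable {n T mA mB : ℕ}

theorem UniquelyDecodable.two_mul_lt_hammingDist {CodeA : (Fin n → Bool) → (Fin mA → Bool)}
    {CodeB : (Fin n → Bool) → (Fin mB → Bool)} (h : UniquelyDecodable T CodeA CodeB)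
    {y y' : Fin n → Bool} (hB : CodeB y = CodeB y') (hne : y ≠ y') :
    2 * T < hammingDist y y' := by
  by_contra! hle
  obtain ⟨x, hx, hx'⟩ :=
    exists_hammingDist_le_of_hammingDist_le_add (y := y) (y' := y') (s := T) (t := T) (by omega)
  exact hne (Prod.ext_iff.mp (h x y x y' hx hx' rfl hB)).2

theorem Achievable.symm (h : Achievable n T mA mB) : Achievable n T mB mA := by
  obtain ⟨CodeA, CodeB, h⟩ := h
  refine ⟨CodeB, CodeA, fun x y x' y' hxy hxy' hB hA => ?_⟩
  rw [hammingDist_comm] at hxy hxy'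
  have := h y x y' x' hxy hxy' hA hB
  simp_all

theorem Achievable.exists_large_code (h : Achievable n T mA mB) :
    ∃ C : Finset (Fin n → Bool), (∀ u ∈ C, ∀ v ∈ C, u ≠ v → 2 * T < hammingDist u v) ∧
      (2 : ℝ) ^ n ≤ 2 ^ mB * #C := by
  obtain ⟨CodeA, CodeB, h⟩ := h
  obtain ⟨b, hb⟩ := Fintype.exists_le_card_fiber_of_nsmul_le_card CodeB
    (b := (2 : ℝ) ^ n / 2 ^ mB) (by simp [mul_div_cancel₀])
  refine ⟨({y | CodeB y = b} : Finset _), fun u hu v hv huv => h.two_mul_lt_hammingDist ?_ huv, ?_⟩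
  · simp_all
  · rwa [div_le_iff₀' (by positivity)] at hb

end SlepianWolf

theorem eventually_not_achievable_of_le {α : ℝ} (hα0 : 0 < α) (hα : α < 1 / 4) :
    ∃ δ > 0, ∀ᶠ n : ℕ in atTop, ∀ mA mB : ℕ,
      (mB : ℝ) ≤ (binEnt α + δ) * n → ¬ Achievable n ⌊α * n⌋₊ mA mB := by
  -- `β(1 - β) = α - 2α³ - α⁴`: balls of radius `βn` are still below the Johnson radius
  set β := α + α ^ 2
  have hαβ : α < β := by simp only [β]; nlinarith
  have hβ : β ≤ 1 / 2 := by nlinarith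
  obtain ⟨L, hL⟩ := exists_eventually_card_filter_hammingDist_le_le (α := α) (β := β)
    (by positivity) hβ (by nlinarith)
  set δ := (binEnt β - binEnt α) / 4
  have hβδ : binEnt β = binEnt α + 4 * δ := by simp only [δ]; ring
  have hδ : 0 < δ := by
    have := binEnt_strictMonoOn ⟨hα0.le, by linarith⟩ ⟨by positivity, by linarith⟩ hαβ
    linarith
  refine ⟨δ, hδ, ?_⟩
  filter_upwards [hL,
    eventually_binEnt_sub_le_logb_choose_floor (β := β) (by positivity) (by linarith) hδ,
    (tendsto_natCast_atTop_atTop.const_mul_atTop (by positivity : 0 < 2 * δ)).eventually_gt_atTop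
      (logb 2 L)] with n hL hchoose hLn mA mB hmB hach
  obtain ⟨C, hC, hcard⟩ := hach.exists_large_code
  set k := ⌊β * n⌋₊
  have hk : k ≤ n := Nat.floor_le_of_le (by nlinarith [(Nat.cast_nonneg n : (0 : ℝ) ≤ n)])
  have hchoose_pos : (0 : ℝ) < n.choose k := by exact_mod_cast Nat.choose_pos hk
  have hCpos : (0 : ℝ) < #C :=
    pos_of_mul_pos_right ((by positivity : (0 : ℝ) < 2 ^ n).trans_le hcard) (by positivity)
  have hchooseL : (n.choose k : ℝ) ≤ 2 ^ mB * L := by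
    have hL0 : 0 ≤ L := (Nat.cast_nonneg _).trans (hL C hC (fun _ => false))
    refine le_of_mul_le_mul_left ?_ hCpos
    calc (#C : ℝ) * n.choose k ≤ 2 ^ n * L := card_mul_choose_le (hL C hC)
      _ ≤ 2 ^ mB * #C * L := mul_le_mul_of_nonneg_right hcard hL0
      _ = #C * (2 ^ mB * L) := by ring
  have hLpos : 0 < L := pos_of_mul_pos_right (hchoose_pos.trans_le hchooseL) (by positivity)
  have hlog : logb 2 (n.choose k) ≤ mB + logb 2 L := by
    have := logb_le_logb_of_le one_lt_two hchoose_pos hchooseL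
    rwa [logb_mul (by positivity) hLpos.ne', logb_pow, logb_self_eq_one one_lt_two, mul_one] at this
  have hgap : binEnt β * n = (binEnt α + 4 * δ) * n := by rw [hβδ]
  linarith

/-- For small enough `α`, no pair of rates in a `δn`-neighborhood of the corner
points `(n, h(α)n)` and `(h(α)n, n)` is achievable for the deterministic
combinatorial Slepian–Wolf scheme with parameters `(n, ⌊αn⌋)`. -/
theorem stmt18 :
    ∃ α₀ : ℝ, 0 < α₀ ∧ ∀ α : ℝ, 0 < α → α < α₀ →
      ∃ δ : ℝ, 0 < δ ∧ ∃ n₀ : ℕ, ∀ n : ℕ, n₀ ≤ n → ∀ mA mB : ℕ,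
        ((|(mA : ℝ) - n| ≤ δ * n ∧ |(mB : ℝ) - binEnt α * n| ≤ δ * n) ∨
         (|(mA : ℝ) - binEnt α * n| ≤ δ * n ∧ |(mB : ℝ) - n| ≤ δ * n)) →
        ¬ Achievable n ⌊α * n⌋₊ mA mB := by
  refine ⟨1 / 4, by norm_num, fun α hα0 hα => ?_⟩
  obtain ⟨δ, hδ, hev⟩ := eventually_not_achievable_of_le hα0 hα
  obtain ⟨n₀, hn₀⟩ := eventually_atTop.mp hev
  refine ⟨δ, hδ, n₀, fun n hn mA mB hm hach => ?_⟩
  rcases hm with ⟨-, hB⟩ | ⟨hA, -⟩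
  · exact hn₀ n hn mA mB (by linarith [(abs_le.mp hB).2]) hach
  · exact hn₀ n hn mB mA (by linarith [(abs_le.mp hA).2]) hach.symm
end
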